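/- For every integer K ≥ 1, the relaxed optimum L^C of the spine instance equals log₂(K+1): there is a real length assignment with value log₂(K+1), and every real length assignment has value at least log₂(K+1). Consequently the integrality gap L*/L^C = K/log₂(K+1) of the optimal path-encoding problem is unbounded as K → ∞. -/
import Mathlib


open scoped Classical BigOperators

namespace SpineInstance

/-- Vertices of the spine instance: the spine vertices `w_1, …, w_K`
(as `Sum.inl`) and the leaves `z_1, …, z_{K+1}` (as `Sum.inr`). -/
abbrev V (K : ℕ) := Fin K ⊕ Fin (K + 1)

/-- Arcs of the spine instance: the `K - 1` spine arcs `(w_j, w_{j+1})`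
(as `Sum.inl`) and the `K + 1` leaf arcs, where leaf arc `i` goes from
`w_i` to `z_i` for `i ≤ K - 1` and from `w_K` to `z_{K+1}` for `i = K`
(0-indexed: `tail (leaf i) = w_{min i (K-1)}`). -/
abbrev A (K : ℕ) := Fin (K - 1) ⊕ Fin (K + 1)

/-- The tail (source vertex) of an arc of the spine instance. The junk value
for `K = 0` is irrelevant since the theorems assume `1 ≤ K`. -/
def tail (K : ℕ) : A K → V K
  | .inl j => .inl (Fin.castLE (Nat.sub_le K 1) j)
  | .inr i =>
      if h : 1 ≤ K then .inl ⟨min i.1 (K - 1), by omega⟩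
      else .inr ⟨0, by omega⟩

/-- The `i`-th path of the spine instance (`i = 0, …, K`): it follows the first
`min i (K-1)` spine arcs and then takes leaf arc `i`, thus running from `w_1`
to the leaf `z_{i+1}`. -/
def path (K : ℕ) (i : Fin (K + 1)) : List (A K) :=
  (((List.finRange (K - 1)).take i.1).map Sum.inl) ++ [Sum.inr i]

/-- Kraft's inequality at every vertex, for an integer length assignment. -/
def KraftZ (K : ℕ) (ℓ : A K → ℤ) : Prop :=
  ∀ v : V K, ∑ a ∈ Finset.univ.filter (fun a => tail K a = v), (2 : ℝ) ^ (-ℓ a) ≤ 1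

/-- Kraft's inequality at every vertex, for a real length assignment. -/
def KraftR (K : ℕ) (ℓ : A K → ℝ) : Prop :=
  ∀ v : V K, ∑ a ∈ Finset.univ.filter (fun a => tail K a = v), (2 : ℝ) ^ (-ℓ a) ≤ 1

/-- The value of an integer length assignment: the largest encoded path length. -/
noncomputable def valueZ (K : ℕ) (ℓ : A K → ℤ) : ℤ :=
  Finset.univ.sup' Finset.univ_nonempty fun i : Fin (K + 1) => ((path K i).map ℓ).sum

/-- The value of a real length assignment: the largest encoded path length. -/
noncomputable def valueR (K : ℕ) (ℓ : A K → ℝ) : ℝ :=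
  Finset.univ.sup' Finset.univ_nonempty fun i : Fin (K + 1) => ((path K i).map ℓ).sum

/-! ### Auxiliary definitions and lemmas -/

/-- The spine lengths of an assignment, as a total function on `ℕ`. -/
noncomputable def s (K : ℕ) (f : A K → ℝ) (t : ℕ) : ℝ :=
  if h : t < K - 1 then f (Sum.inl ⟨t, h⟩) else 0

/-- The leaf lengths of an assignment, as a total function on `ℕ`. -/
noncomputable def r (K : ℕ) (f : A K → ℝ) (i : ℕ) : ℝ :=
  if h : i < K + 1 then f (Sum.inr ⟨i, h⟩) else 0

lemma path_sum (K : ℕ) (f : A K → ℝ) (i : Fin (K + 1)) :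
    ((path K i).map f).sum
      = (∑ t ∈ Finset.range (min i.1 (K - 1)), s K f t) + f (Sum.inr i) := by
  have h1 : (((List.finRange (K - 1)).take i.1).map Sum.inl).map f
      = ((List.ofFn (fun j : Fin (K-1) => f (Sum.inl j))).take i.1) := by
    rw [List.ofFn_eq_map, ← List.map_take, List.map_map]
    rfl
  rw [path, List.map_append, List.sum_append, h1, List.sum_take_ofFn]
  simp only [List.map_cons, List.map_nil, List.sum_cons, List.sum_nil, add_zero]
  congr 1
  rw [Finset.sum_filter]
  have h2 : ∀ a : Fin (K - 1),
      (if a.1 < i.1 then f (Sum.inl a) else 0) = (fun t => if t < i.1 then s K f t else 0) a.1 := by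
    intro a
    simp only [s, a.isLt, dif_pos, Fin.eta]
  rw [Finset.sum_congr rfl (fun a _ => h2 a),
    Fin.sum_univ_eq_sum_range (fun t => if t < i.1 then s K f t else 0) (K - 1),
    ← Finset.sum_filter]
  congr 1
  ext t
  simp only [Finset.mem_filter, Finset.mem_range, lt_min_iff]
  omega

lemma filter_inr (K : ℕ) (hK : 1 ≤ K) (v : Fin (K + 1)) :
    Finset.univ.filter (fun a : A K => tail K a = Sum.inr v) = ∅ := by
  ext a
  rcases a with j | i <;> simp [tail, hK]

lemma filter_inl (K : ℕ) (hK : 1 ≤ K) (j : Fin K) (h : j.1 < K - 1) :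
    Finset.univ.filter (fun a : A K => tail K a = Sum.inl j)
      = {Sum.inl ⟨j.1, h⟩, Sum.inr ⟨j.1, by omega⟩} := by
  ext a
  rcases a with j' | i <;>
    simp only [Finset.mem_filter, Finset.mem_univ, true_and, tail, hK, dif_pos,
      Finset.mem_insert, Finset.mem_singleton, Sum.inl.injEq, Sum.inr.injEq,
      Fin.ext_iff, Fin.castLE, reduceCtorEq, or_false, false_or] <;> omega

lemma filter_last (K : ℕ) (hK : 1 ≤ K) (j : Fin K) (h : j.1 = K - 1) :
    Finset.univ.filter (fun a : A K => tail K a = Sum.inl j)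
      = {Sum.inr ⟨K - 1, by omega⟩, Sum.inr ⟨K, by omega⟩} := by
  ext a
  rcases a with j' | i <;> have hj2 := j.2
  · have hj' := j'.2
    simp only [Finset.mem_filter, Finset.mem_univ, true_and, tail, hK, dif_pos,
      Finset.mem_insert, Finset.mem_singleton, Sum.inl.injEq, Sum.inr.injEq,
      Fin.ext_iff, Fin.coe_castLE, reduceCtorEq, or_false, false_or, or_self,
      iff_false]
    omega
  · simp only [Finset.mem_filter, Finset.mem_univ, true_and, tail, hK, dif_pos,
      Finset.mem_insert, Finset.mem_singleton, Sum.inl.injEq, Sum.inr.injEq,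
      Fin.ext_iff, Fin.coe_castLE, reduceCtorEq, or_false, false_or]
    omega

/-- Kraft's inequality at an inner spine vertex, in terms of `s` and `r`. -/
lemma kraft_inner (K : ℕ) (hK : 1 ≤ K) (ℓ : A K → ℝ) (hℓ : KraftR K ℓ)
    (j : ℕ) (hj : j < K - 1) :
    (2 : ℝ) ^ (-(s K ℓ j)) + (2 : ℝ) ^ (-(r K ℓ j)) ≤ 1 := by
  have h := hℓ (Sum.inl ⟨j, by omega⟩)
  rw [filter_inl K hK ⟨j, by omega⟩ hj, Finset.sum_pair (by simp)] at h
  have hj1 : j < K + 1 := by omega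
  simpa [s, r, hj, hj1] using h

/-- Kraft's inequality at the last spine vertex, in terms of `r`. -/
lemma kraft_last (K : ℕ) (hK : 1 ≤ K) (ℓ : A K → ℝ) (hℓ : KraftR K ℓ) :
    (2 : ℝ) ^ (-(r K ℓ (K - 1))) + (2 : ℝ) ^ (-(r K ℓ K)) ≤ 1 := by
  have h := hℓ (Sum.inl ⟨K - 1, by omega⟩)
  rw [filter_last K hK ⟨K - 1, by omega⟩ rfl,
    Finset.sum_pair (by simp [Fin.ext_iff]; omega)] at h
  simpa [r, Nat.lt_succ_iff, hK] using h

/-- The key Kraft-type inequality for the paths of the spine instance,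
proved by downward induction along the spine. -/
lemma kraft_paths (K : ℕ) (hK : 1 ≤ K) (ℓ : A K → ℝ) (hℓ : KraftR K ℓ) :
    ∀ d, d ≤ K - 1 →
      ∑ i ∈ Finset.Icc (K - 1 - d) K,
        (2 : ℝ) ^ (-((∑ t ∈ Finset.Ico (K - 1 - d) (min i (K - 1)), s K ℓ t) + r K ℓ i)) ≤ 1 := by
  intro d
  induction d with
  | zero =>
    intro _
    rw [Nat.sub_zero]
    have hIcc : Finset.Icc (K - 1) K = {K - 1, K} := by
      ext x; simp only [Finset.mem_Icc, Finset.mem_insert, Finset.mem_singleton]; omega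
    rw [hIcc, Finset.sum_pair (by omega)]
    have hm1 : min (K - 1) (K - 1) = K - 1 := min_self _
    have hm2 : min K (K - 1) = K - 1 := min_eq_right (Nat.sub_le K 1)
    rw [hm1, hm2, Finset.Ico_self, Finset.sum_empty, zero_add, zero_add]
    exact kraft_last K hK ℓ hℓ
  | succ d ih =>
    intro hd
    set j := K - 1 - (d + 1) with hjdef
    have hj : j < K - 1 := by omega
    have hstep : K - 1 - d = j + 1 := by omega
    have hIcc : Finset.Icc j K = insert j (Finset.Icc (j + 1) K) := by
      ext x
      simp only [Finset.mem_Icc, Finset.mem_insert]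
      omega
    rw [hIcc, Finset.sum_insert (by simp)]
    have hterm : (2 : ℝ) ^ (-((∑ t ∈ Finset.Ico j (min j (K - 1)), s K ℓ t) + r K ℓ j))
        = (2 : ℝ) ^ (-(r K ℓ j)) := by
      rw [min_eq_left (le_of_lt hj), Finset.Ico_self, Finset.sum_empty, zero_add]
    have hrest : ∑ i ∈ Finset.Icc (j + 1) K,
          (2 : ℝ) ^ (-((∑ t ∈ Finset.Ico j (min i (K - 1)), s K ℓ t) + r K ℓ i))
        = (2 : ℝ) ^ (-(s K ℓ j)) * ∑ i ∈ Finset.Icc (j + 1) K,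
          (2 : ℝ) ^ (-((∑ t ∈ Finset.Ico (j + 1) (min i (K - 1)), s K ℓ t) + r K ℓ i)) := by
      rw [Finset.mul_sum]
      refine Finset.sum_congr rfl ?_
      intro i hi
      obtain ⟨hi1, hiK⟩ := Finset.mem_Icc.mp hi
      have hIco : Finset.Ico j (min i (K - 1)) = insert j (Finset.Ico (j + 1) (min i (K - 1))) := by
        ext x
        simp only [Finset.mem_Ico, Finset.mem_insert, lt_min_iff]
        omega
      rw [hIco, Finset.sum_insert (by simp), add_assoc, neg_add,
        Real.rpow_add (by norm_num : (0:ℝ) < 2)]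
    rw [hterm, hrest]
    have hT := ih (by omega)
    rw [hstep] at hT
    have hpos : (0:ℝ) ≤ (2 : ℝ) ^ (-(s K ℓ j)) := le_of_lt (Real.rpow_pos_of_pos (by norm_num) _)
    have h2 : (2 : ℝ) ^ (-(s K ℓ j)) * ∑ i ∈ Finset.Icc (j + 1) K,
          (2 : ℝ) ^ (-((∑ t ∈ Finset.Ico (j + 1) (min i (K - 1)), s K ℓ t) + r K ℓ i))
        ≤ (2 : ℝ) ^ (-(s K ℓ j)) := by
      calc _ ≤ (2 : ℝ) ^ (-(s K ℓ j)) * 1 := mul_le_mul_of_nonneg_left hT hpos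
        _ = _ := mul_one _
    have h3 := kraft_inner K hK ℓ hℓ j hj
    linarith

/-- Every real Kraft assignment has value at least `log₂ (K+1)`. -/
lemma lower_bound (K : ℕ) (hK : 1 ≤ K) (ℓ : A K → ℝ) (hℓ : KraftR K ℓ) :
    Real.logb 2 (K + 1) ≤ valueR K ℓ := by
  have h := kraft_paths K hK ℓ hℓ (K - 1) le_rfl
  rw [Nat.sub_self] at h
  set Vv := valueR K ℓ with hV
  have hle : ∀ i ∈ Finset.Icc 0 K,
      (2 : ℝ) ^ (-Vv) ≤ (2 : ℝ) ^ (-((∑ t ∈ Finset.Ico 0 (min i (K - 1)), s K ℓ t) + r K ℓ i)) := by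
    intro i hi
    have hiK : i ≤ K := (Finset.mem_Icc.mp hi).2
    have hfi : i < K + 1 := by omega
    have hL : (∑ t ∈ Finset.Ico 0 (min i (K - 1)), s K ℓ t) + r K ℓ i
        = ((path K (⟨i, hfi⟩ : Fin (K + 1))).map ℓ).sum := by
      rw [path_sum]
      congr 1
      · rw [← Finset.range_eq_Ico]
      · simp [r, hfi]
    rw [hL]
    rw [Real.rpow_le_rpow_left_iff (by norm_num : (1:ℝ) < 2), neg_le_neg_iff]
    exact Finset.le_sup' (fun i : Fin (K + 1) => ((path K i).map ℓ).sum) (Finset.mem_univ _)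
  have hsum : ((K : ℝ) + 1) * (2 : ℝ) ^ (-Vv) ≤ 1 := by
    calc ((K : ℝ) + 1) * (2 : ℝ) ^ (-Vv)
        = ∑ _i ∈ Finset.Icc 0 K, (2 : ℝ) ^ (-Vv) := by
          rw [Finset.sum_const, Nat.card_Icc, Nat.sub_zero, nsmul_eq_mul]
          push_cast
          ring
      _ ≤ ∑ i ∈ Finset.Icc 0 K,
            (2 : ℝ) ^ (-((∑ t ∈ Finset.Ico 0 (min i (K - 1)), s K ℓ t) + r K ℓ i)) :=
          Finset.sum_le_sum hle
      _ ≤ 1 := h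
  have hKpos : (0:ℝ) < (K : ℝ) + 1 := by positivity
  rw [Real.logb_le_iff_le_rpow (by norm_num : (1:ℝ) < 2) hKpos]
  have hp : (0:ℝ) < (2 : ℝ) ^ Vv := Real.rpow_pos_of_pos (by norm_num) _
  have hmul := mul_le_mul_of_nonneg_right hsum (le_of_lt hp)
  have hcancel : (2 : ℝ) ^ (-Vv) * (2 : ℝ) ^ Vv = 1 := by
    rw [← Real.rpow_add (by norm_num : (0:ℝ) < 2), neg_add_cancel, Real.rpow_zero]
  calc ((K : ℝ) + 1) = ((K : ℝ) + 1) * ((2 : ℝ) ^ (-Vv) * (2 : ℝ) ^ Vv) := by rw [hcancel, mul_one]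
    _ = ((K : ℝ) + 1) * (2 : ℝ) ^ (-Vv) * (2 : ℝ) ^ Vv := by ring
    _ ≤ 1 * (2 : ℝ) ^ Vv := hmul
    _ = (2 : ℝ) ^ Vv := one_mul _

/-- The optimal real assignment. -/
noncomputable def ℓstar (K : ℕ) : A K → ℝ
  | .inl j => Real.logb 2 (((K : ℝ) + 1 - j.1) / ((K : ℝ) - j.1))
  | .inr i => Real.logb 2 ((K : ℝ) + 1 - min i.1 (K - 1))

lemma two_rpow_neg_logb (x : ℝ) (hx : 0 < x) : (2 : ℝ) ^ (-(Real.logb 2 x)) = x⁻¹ := by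
  rw [Real.rpow_neg (by norm_num : (0:ℝ) ≤ 2),
    Real.rpow_logb (by norm_num) (by norm_num) hx]

lemma ℓstar_kraft (K : ℕ) (hK : 1 ≤ K) : KraftR K (ℓstar K) := by
  intro v
  rcases v with j | v
  · rcases lt_or_eq_of_le (Nat.le_sub_one_of_lt j.2) with h | h
    · rw [filter_inl K hK j h, Finset.sum_pair (by simp)]
      have hjr : ((j.1 : ℝ)) < (K : ℝ) - 1 := by
        have : (j.1 : ℝ) < ((K - 1 : ℕ) : ℝ) := by exact_mod_cast h
        rw [Nat.cast_sub hK] at this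
        simpa using this
      have hx : (0:ℝ) < (K : ℝ) - j.1 := by linarith
      have hy : (0:ℝ) < (K : ℝ) + 1 - j.1 := by linarith
      have hmin : min j.1 (K - 1) = j.1 := min_eq_left (le_of_lt h)
      show (2:ℝ) ^ (-(ℓstar K (Sum.inl ⟨j.1, h⟩))) + (2:ℝ) ^ (-(ℓstar K (Sum.inr ⟨j.1, by omega⟩))) ≤ 1
      simp only [ℓstar, hmin]
      rw [two_rpow_neg_logb _ (div_pos hy hx), two_rpow_neg_logb _ hy, inv_div]
      have heq : ((K:ℝ) - j.1) / ((K:ℝ) + 1 - j.1) + ((K:ℝ) + 1 - j.1)⁻¹ = 1 := by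
        field_simp
        ring
      exact le_of_eq heq
    · rw [filter_last K hK j h,
        Finset.sum_pair (by simp only [ne_eq, Sum.inr.injEq, Fin.ext_iff]; omega)]
      have hmin1 : min (K - 1) (K - 1) = K - 1 := min_self _
      have hmin2 : min K (K - 1) = K - 1 := min_eq_right (Nat.sub_le K 1)
      show (2:ℝ) ^ (-(ℓstar K (Sum.inr ⟨K - 1, by omega⟩))) + (2:ℝ) ^ (-(ℓstar K (Sum.inr ⟨K, by omega⟩))) ≤ 1
      simp only [ℓstar, hmin1, hmin2]
      have hcast : (K : ℝ) + 1 - ((K - 1 : ℕ) : ℝ) = 2 := by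
        rw [Nat.cast_sub hK]
        push_cast
        ring
      rw [hcast, two_rpow_neg_logb 2 (by norm_num)]
      norm_num
  · rw [filter_inr K hK v]
    simp

lemma ℓstar_path_sum (K : ℕ) (hK : 1 ≤ K) (i : Fin (K + 1)) :
    ((path K i).map (ℓstar K)).sum = Real.logb 2 ((K : ℝ) + 1) := by
  rw [path_sum]
  set m := min i.1 (K - 1) with hm
  have hmle : m ≤ K - 1 := min_le_right _ _
  have hsum : ∑ t ∈ Finset.range m, s K (ℓstar K) t
      = Real.logb 2 ((K : ℝ) + 1) - Real.logb 2 ((K : ℝ) + 1 - m) := by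
    have hcongr : ∀ t ∈ Finset.range m, s K (ℓstar K) t
        = (fun t : ℕ => Real.logb 2 ((K : ℝ) + 1 - t)) t
          - (fun t : ℕ => Real.logb 2 ((K : ℝ) + 1 - t)) (t + 1) := by
      intro t ht
      have ht' : t < K - 1 := lt_of_lt_of_le (Finset.mem_range.mp ht) hmle
      have htr : (t : ℝ) < (K : ℝ) - 1 := by
        have : (t : ℝ) < ((K - 1 : ℕ) : ℝ) := by exact_mod_cast ht'
        rw [Nat.cast_sub hK] at this
        simpa using this
      simp only [s, dif_pos ht', ℓstar]
      rw [Real.logb_div (by push_cast; intro hc; nlinarith) (by intro hc; nlinarith)]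
      have : (K : ℝ) + 1 - ((t : ℝ) + 1) = (K : ℝ) - t := by ring
      push_cast
      rw [this]
    rw [Finset.sum_congr rfl hcongr, Finset.sum_range_sub']
    simp
  rw [hsum]
  show _ - _ + ℓstar K (Sum.inr i) = _
  simp only [ℓstar, ← hm]
  ring

lemma ℓstar_value (K : ℕ) (hK : 1 ≤ K) : valueR K (ℓstar K) = Real.logb 2 (K + 1) := by
  rw [valueR]
  apply le_antisymm
  · apply Finset.sup'_le
    intro i _
    rw [ℓstar_path_sum K hK i]
  · calc Real.logb 2 ((K : ℝ) + 1) = ((path K 0).map (ℓstar K)).sum := (ℓstar_path_sum K hK 0).symm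
      _ ≤ _ := Finset.le_sup' (fun i : Fin (K + 1) => ((path K i).map (ℓstar K)).sum)
          (Finset.mem_univ _)

end SpineInstance

open SpineInstance in
/-- For every integer `K ≥ 1`, the relaxed optimum `L^C` of the
spine instance equals `log₂ (K + 1)`: there is a real length assignment with
value `log₂ (K + 1)`, and every real length assignment has value at least
`log₂ (K + 1)`. Consequently, the integrality gap `L* / L^C = K / log₂ (K + 1)`
of the optimal path-encoding problem is unbounded as `K → ∞`. -/
theorem spine_relaxed_optimum_and_integrality_gap :
    (∀ K : ℕ, 1 ≤ K →
      (∃ ℓ : A K → ℝ, KraftR K ℓ ∧ valueR K ℓ = Real.logb 2 (K + 1)) ∧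
      (∀ ℓ : A K → ℝ, KraftR K ℓ → Real.logb 2 (K + 1) ≤ valueR K ℓ)) ∧
    Filter.Tendsto (fun K : ℕ => (K : ℝ) / Real.logb 2 (K + 1))
      Filter.atTop Filter.atTop := by
  constructor
  · intro K hK
    exact ⟨⟨ℓstar K, ℓstar_kraft K hK, ℓstar_value K hK⟩, fun ℓ hℓ => lower_bound K hK ℓ hℓ⟩
  · have haux : Filter.Tendsto (fun x : ℝ => x / Real.log x) Filter.atTop Filter.atTop := by
      have h0 : Filter.Tendsto (fun x : ℝ => Real.log x / x) Filter.atTop (nhds 0) :=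
        Real.isLittleO_log_id_atTop.tendsto_div_nhds_zero
      have h1 : Filter.Tendsto (fun x : ℝ => Real.log x / x) Filter.atTop (nhdsWithin 0 (Set.Ioi 0)) := by
        apply tendsto_nhdsWithin_of_tendsto_nhds_of_eventually_within _ h0
        filter_upwards [Filter.eventually_gt_atTop (1 : ℝ)] with x hx
        exact Set.mem_Ioi.mpr (div_pos (Real.log_pos hx) (lt_trans zero_lt_one hx))
      have h2 := h1.inv_tendsto_nhdsGT_zero
      refine h2.congr fun x => ?_
      simp [Pi.inv_apply, inv_div]
    have h3 : Filter.Tendsto (fun x : ℝ => x / Real.logb 2 x) Filter.atTop Filter.atTop := by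
      have := haux.atTop_mul_const (Real.log_pos one_lt_two)
      refine this.congr fun x => ?_
      rw [Real.logb, div_div_eq_mul_div, div_mul_eq_mul_div]
    have h4 : Filter.Tendsto (fun K : ℕ => ((K : ℝ) + 1) / Real.logb 2 ((K : ℝ) + 1))
        Filter.atTop Filter.atTop :=
      h3.comp ((tendsto_natCast_atTop_atTop (R := ℝ)).atTop_add tendsto_const_nhds)
    have h5 := h4.atTop_mul_const (show (0:ℝ) < 1/2 by norm_num)
    apply Filter.tendsto_atTop_mono' _ _ h5
    filter_upwards [Filter.eventually_ge_atTop 1] with K hK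
    have hK1 : (1:ℝ) ≤ (K : ℝ) := by exact_mod_cast hK
    have hlog : 0 < Real.logb 2 ((K : ℝ) + 1) := Real.logb_pos one_lt_two (by linarith)
    rw [div_mul_eq_mul_div]
    gcongr
    linarith
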